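/- arXiv:2309.03500 — 2 statements merged into one kernel-verified Lean document; each statement's English description precedes it below -/
import Mathlib

section
/- Let d ≥ 0 be an even integer and m ≥ d+2, with distinct nodes x₁,…,x_m and positive weights w₁,…,w_m that are symmetric about 0 (there is a bijection σ of {1,…,m} with x_{σ(l)} = −x_l and w_{σ(l)} = w_l for every l). Then the WLPR masks of degree d and of degree d+1 coincide: W X_d (X_dᵀ W X_d)⁻¹ e₁^{(d+1)} = W X_{d+1} (X_{d+1}ᵀ W X_{d+1})⁻¹ e₁^{(d+2)}, where X_k is the m×(k+1) matrix with entries x_l^t (t = 0,…,k) and e₁^{(k)} is the first standard basis vector of ℝ^k. In particular, S_{d,w^λ} = S_{d+1,w^λ} for even d. -/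
open Matrix

/-- The Vandermonde-type design matrix `X_k` with entries `(X_k)_{l,t} = x_l ^ t`,
`t = 0,…,k`. -/
noncomputable def designX (m k : ℕ) (x : Fin m → ℝ) : Matrix (Fin m) (Fin (k + 1)) ℝ :=
  Matrix.of fun l t => x l ^ (t : ℕ)

/-- The WLPR mask of degree `k`: `W X_k (X_kᵀ W X_k)⁻¹ e₁`. -/
noncomputable def wlprMask (m k : ℕ) (x : Fin m → ℝ) (w : Fin m → ℝ) : Fin m → ℝ :=
  (Matrix.diagonal w * designX m k x *
    ((designX m k x)ᵀ * Matrix.diagonal w * designX m k x)⁻¹) *ᵥ Pi.single 0 1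

/-!
With moments `μ_j = ∑ₗ wₗ xₗ^j`, the Gram matrix `X_kᵀ W X_k` is the Hankel matrix `(μ_{s+t})`,
and the symmetry of nodes and weights kills every odd moment. Then `u ↦ ((-1)^t u_t)_t` commutes
with the Hankel matrix up to the sign `(-1)^s` of the row, and fixes `e₁`, so the coefficient vector
`u = (X_dᵀ W X_d)⁻¹ e₁` has vanishing odd entries. Padding `u` by a zero gives a solution of the
degree `d + 1` system: the new last equation reads `∑_t μ_{d+1+t} u_t = 0`, since for even `t` the
moment has odd index and for odd `t` the coefficient vanishes. The padded vector produces the same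
fitted values `X_{d+1} (u, 0) = X_d u`, hence the same mask.
-/

noncomputable def moment {m : ℕ} (x w : Fin m → ℝ) (j : ℕ) : ℝ :=
  ∑ l, w l * x l ^ j

def hankel {R : Type*} (k : ℕ) (μ : ℕ → R) : Matrix (Fin (k + 1)) (Fin (k + 1)) R :=
  of fun s t => μ (s + t)

theorem Fin.snoc_single_zero {R : Type*} [Zero R] {n : ℕ} (i : Fin n) (a : R) :
    Fin.snoc (Pi.single i a : Fin n → R) 0 = (Pi.single i.castSucc a : Fin (n + 1) → R) := by
  ext s
  refine Fin.lastCases ?_ (fun s => ?_) s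
  · simp [(Fin.castSucc_lt_last i).ne]
  · simp [Pi.single_apply]

section Hankel

variable {R : Type*} [CommRing R] {k : ℕ} {μ : ℕ → R}

theorem hankel_mulVec_alternating (hμ : ∀ j, Odd j → μ j = 0) (u : Fin (k + 1) → R) :
    hankel k μ *ᵥ (fun t => (-1) ^ (t : ℕ) * u t) =
      fun s : Fin (k + 1) => (-1) ^ (s : ℕ) * (hankel k μ *ᵥ u) s := by
  ext s
  simp only [mulVec, dotProduct, Finset.mul_sum]
  refine Finset.sum_congr rfl fun t _ => ?_
  rcases Nat.even_or_odd ((s : ℕ) + t) with hst | hst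
  · rw [neg_one_pow_congr (Nat.even_add.1 hst).symm]
    ring
  · simp [hankel, hμ _ hst]

theorem hankel_succ_mulVec_snoc_zero (u : Fin (k + 1) → R) :
    hankel (k + 1) μ *ᵥ Fin.snoc u 0 =
      Fin.snoc (hankel k μ *ᵥ u) (∑ t : Fin (k + 1), μ (k + 1 + t) * u t) := by
  ext s
  refine Fin.lastCases ?_ (fun s => ?_) s <;>
    simp [mulVec, dotProduct, Fin.sum_univ_castSucc, hankel]

end Hankel

theorem hankel_solution_apply_eq_zero_of_odd {K : Type*} [Field K] [CharZero K] {k : ℕ} {μ : ℕ → K}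
    (hμ : ∀ j, Odd j → μ j = 0) (hH : IsUnit (hankel k μ)) {u : Fin (k + 1) → K}
    (hu : hankel k μ *ᵥ u = Pi.single 0 1) {t : Fin (k + 1)} (ht : Odd (t : ℕ)) : u t = 0 := by
  have hfix : hankel k μ *ᵥ (fun t => (-1) ^ (t : ℕ) * u t) = hankel k μ *ᵥ u := by
    rw [hankel_mulVec_alternating hμ, hu]
    ext s
    rcases eq_or_ne s 0 with rfl | hs
    · simp
    · simp [Pi.single_eq_of_ne hs]
  have := congrFun (mulVec_injective_iff_isUnit.2 hH hfix) t
  rw [ht.neg_one_pow, neg_one_mul, neg_eq_iff_add_eq_zero] at this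
  simpa using this

section Design

variable {m k : ℕ} {x : Fin m → ℝ}

theorem designX_succ_mulVec_snoc_zero (u : Fin (k + 1) → ℝ) :
    designX m (k + 1) x *ᵥ Fin.snoc u 0 = designX m k x *ᵥ u := by
  ext l
  simp [mulVec, dotProduct, Fin.sum_univ_castSucc, designX]

theorem designX_mulVec_injective (hk : k + 1 ≤ m) (hx : Function.Injective x) :
    Function.Injective (designX m k x).mulVec := by
  have hV : IsUnit (vandermonde (x ∘ Fin.castLE hk)) :=
    (isUnit_iff_isUnit_det _).2 <| isUnit_iff_ne_zero.2 <|
      det_vandermonde_ne_zero_iff.2 (hx.comp (Fin.castLE_injective hk))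
  intro u v huv
  refine mulVec_injective_iff_isUnit.2 hV (funext fun i => ?_)
  simpa [mulVec, dotProduct, vandermonde, designX] using congrFun huv (Fin.castLE hk i)

theorem gram_eq_hankel (w : Fin m → ℝ) :
    (designX m k x)ᵀ * diagonal w * designX m k x = hankel k (moment x w) := by
  ext s t
  simp only [mul_apply, transpose_apply, diagonal_apply, designX, of_apply, hankel, moment,
    mul_ite, mul_zero, Finset.sum_ite_eq', Finset.mem_univ, if_true, pow_add]
  exact Finset.sum_congr rfl fun l _ => by ring

theorem posDef_gram (hk : k + 1 ≤ m) (hx : Function.Injective x) {w : Fin m → ℝ}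
    (hw : ∀ l, 0 < w l) : ((designX m k x)ᵀ * diagonal w * designX m k x).PosDef := by
  simpa [conjTranspose_eq_transpose_of_trivial] using
    (posDef_diagonal_iff.2 hw).conjTranspose_mul_mul_same (designX_mulVec_injective hk hx)

theorem wlprMask_eq_of_hankel_mulVec {w : Fin m → ℝ} (hH : IsUnit (hankel k (moment x w)))
    {c : Fin (k + 1) → ℝ} (hc : hankel k (moment x w) *ᵥ c = Pi.single 0 1) :
    wlprMask m k x w = (diagonal w * designX m k x) *ᵥ c := by
  have := hH.invertible
  rw [wlprMask, gram_eq_hankel, ← mulVec_mulVec, inv_mulVec_eq_vec hc.symm]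

end Design

theorem moment_eq_zero_of_odd {m : ℕ} {x w : Fin m → ℝ} (σ : Equiv.Perm (Fin m))
    (hxσ : ∀ l, x (σ l) = -x l) (hwσ : ∀ l, w (σ l) = w l) {j : ℕ} (hj : Odd j) :
    moment x w j = 0 := by
  have h := Equiv.sum_comp σ (fun l => w l * x l ^ j)
  simp only [hxσ, hwσ, hj.neg_pow, mul_neg, Finset.sum_neg_distrib] at h
  rw [moment]
  linarith

/-- for even `d`, `m ≥ d+2`, distinct nodes and positive weights
symmetric about `0` (a bijection `σ` with `x_{σ(l)} = −x_l`, `w_{σ(l)} = w_l`),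
the WLPR masks of degree `d` and of degree `d+1` coincide. -/
theorem stmt8 (d m : ℕ) (hd : Even d) (hm : d + 2 ≤ m)
    (x : Fin m → ℝ) (hx : Function.Injective x)
    (w : Fin m → ℝ) (hw : ∀ l, 0 < w l)
    (σ : Equiv.Perm (Fin m))
    (hxσ : ∀ l, x (σ l) = -x l) (hwσ : ∀ l, w (σ l) = w l) :
    wlprMask m d x w = wlprMask m (d + 1) x w := by
  have hodd : ∀ j, Odd j → moment x w j = 0 := fun j => moment_eq_zero_of_odd σ hxσ hwσ
  have hd1 : d + 1 ≤ m := by omega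
  have hH : ∀ k, k + 1 ≤ m → IsUnit (hankel k (moment x w)) := fun k hk =>
    gram_eq_hankel (x := x) w ▸ (posDef_gram hk hx hw).isUnit
  obtain ⟨u, hu⟩ := mulVec_surjective_iff_isUnit.2 (hH d hd1) (Pi.single 0 1)
  have hlast : ∑ t : Fin (d + 1), moment x w (d + 1 + t) * u t = 0 := by
    refine Finset.sum_eq_zero fun t _ => ?_
    rcases Nat.even_or_odd (t : ℕ) with ht | ht
    · rw [hodd _ (by rw [add_right_comm]; exact (hd.add ht).add_one), zero_mul]
    · rw [hankel_solution_apply_eq_zero_of_odd hodd (hH d hd1) hu ht, mul_zero]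
  have hv : hankel (d + 1) (moment x w) *ᵥ Fin.snoc u 0 = Pi.single 0 1 := by
    rw [hankel_succ_mulVec_snoc_zero, hu, hlast, Fin.snoc_single_zero, Fin.castSucc_zero]
  rw [wlprMask_eq_of_hankel_mulVec (hH d hd1) hu,
    wlprMask_eq_of_hankel_mulVec (hH (d + 1) hm) hv, ← mulVec_mulVec, ← mulVec_mulVec,
    designX_succ_mulVec_snoc_zero]
end

section
/- Suppose each S_{a^n} reproduces Π₀ and is odd-symmetric, i.e., a^{n,0}_l = a^{n,0}_{L_n+1−n−l} for all l = 1−n,…,L_n and a^{n,1}_l = a^{n,1}_{L_n+2−n−l} for all l = 1−n,…,L_n+1. Let r : [−1,1] → ℝ be C¹ with R(t) = ∫_{−1}^{t} r(s) ds, and assume there exist α > 2 and μ > 0 such that for all n and all j = 1−n,…,L_n, a^{n,0}_j − a^{n,1}_j = r(j/n)·n^{−2} + ε^n_j with |ε^n_j| ≤ μ·n^{−α}, and ∫_{−1}^{1} |R(t)| dt < 1. Then there exists n₀ ∈ ℕ such that the subdivision scheme S_{a^n} is uniformly convergent for every n > n₀. -/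
/-- The subdivision operator of the family `S_{a^n}`:
`(S f)_{2j} = ∑_{l=1−n}^{L_n} a^{n,0}_l f_{j+l}` and
`(S f)_{2j+1} = ∑_{l=1−n}^{L_n+1} a^{n,1}_l f_{j+l}`. -/
noncomputable def Sfam (a0 a1 : ℤ → ℝ) (nn Ln : ℤ) (f : ℤ → ℝ) : ℤ → ℝ := fun m =>
  if m % 2 = 0 then
    ∑ l ∈ Finset.Icc (1 - nn) Ln, a0 l * f (m / 2 + l)
  else
    ∑ l ∈ Finset.Icc (1 - nn) (Ln + 1), a1 l * f ((m - 1) / 2 + l)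

/-- A bounded real sequence indexed by `ℤ`. -/
def IsBoundedSeq (f : ℤ → ℝ) : Prop := ∃ M : ℝ, ∀ j : ℤ, |f j| ≤ M

/-- `S^k f⁰` converges uniformly to `F`:
`lim_{k→∞} sup_{j∈ℤ} |(S^k f⁰)_j − F(2^{−k} j)| = 0`. -/
def ConvergesUniformlyTo (S : (ℤ → ℝ) → (ℤ → ℝ)) (f : ℤ → ℝ) (F : ℝ → ℝ) : Prop :=
  ∀ ε : ℝ, 0 < ε → ∃ K : ℕ, ∀ k : ℕ, K ≤ k → ∀ j : ℤ,
    |(S^[k] f) j - F ((j : ℝ) / 2 ^ k)| ≤ ε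

/-- A subdivision scheme is uniformly convergent if every bounded initial sequence
has a continuous limit function. -/
def UnifConvergent (S : (ℤ → ℝ) → (ℤ → ℝ)) : Prop :=
  ∀ f : ℤ → ℝ, IsBoundedSeq f → ∃ F : ℝ → ℝ, Continuous F ∧ ConvergesUniformlyTo S f F

/-!
If the difference scheme of `S` has norm `σ < 1`, the differences of `S^k f` decay like `σ^k`,
and `S^(k+1) f` differs by `O(σ^k)` from `S^k f` read at the parent index; hence the samples
`S^k f ⌊x 2^k⌋` converge uniformly to a continuous limit. Reproduction of constants turns
`S f (2j+1) - S f (2j)`, by Abel summation, into the mask `E_l = ∑_{k ≤ l} (a^{n,1}_k - a^{n,0}_k)`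
applied to the differences of `f`, and odd symmetry makes `S` commute with the reflection
`i ↦ -i`, which transfers this bound to the other parity. Finally, the hypothesis on
`a^{n,0} - a^{n,1}` makes `-n E_l` a Riemann sum of `r` approximating `R(l/n)` with error
`O(1/n) + O(n^(2-α))`, so `σ_n = ∑_l |E_l|` is a Riemann sum of `|R|` up to a vanishing error
and tends to `∫ |R| < 1`.
-/

open Finset Filter Topology

section Convergence

lemma floor_two_mul_div_two (y : ℝ) : ⌊2 * y⌋ / 2 = ⌊y⌋ := by
  have := Int.floor_div_natCast (2 * y) 2
  push_cast at this
  rw [mul_div_cancel_left₀ y two_ne_zero] at this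
  exact this.symm

lemma abs_sub_floor_le_of_abs_sub_lt_one {g : ℤ → ℝ} {D : ℝ} (hg : ∀ j, |g (j + 1) - g j| ≤ D)
    {x y : ℝ} (hxy : |y - x| < 1) : |g ⌊y⌋ - g ⌊x⌋| ≤ D := by
  have hD : 0 ≤ D := (abs_nonneg _).trans (hg 0)
  have h₁ : ⌊y⌋ ≤ ⌊x⌋ + 1 := by
    rw [← Int.floor_add_one]; exact Int.floor_le_floor (by linarith [(abs_lt.1 hxy).2])
  have h₂ : ⌊x⌋ ≤ ⌊y⌋ + 1 := by
    rw [← Int.floor_add_one]; exact Int.floor_le_floor (by linarith [(abs_lt.1 hxy).1])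
  obtain h | h | h : ⌊y⌋ = ⌊x⌋ ∨ ⌊y⌋ = ⌊x⌋ + 1 ∨ ⌊x⌋ = ⌊y⌋ + 1 := by omega
  · simp [h, hD]
  · rw [h]; exact hg _
  · rw [abs_sub_comm, h]; exact hg _

variable {g : ℕ → ℤ → ℝ} {γ C D : ℝ}

lemma exists_abs_sample_sub_le (hγ1 : γ < 1)
    (hstep : ∀ k m, |g (k + 1) m - g k (m / 2)| ≤ γ ^ k * C) :
    ∃ F : ℝ → ℝ, ∀ (x : ℝ) k, |g k ⌊x * 2 ^ k⌋ - F x| ≤ γ ^ k * (C / (1 - γ)) := by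
  have hdist : ∀ (x : ℝ) k, dist (g k ⌊x * 2 ^ k⌋) (g (k + 1) ⌊x * 2 ^ (k + 1)⌋) ≤ C * γ ^ k := by
    intro x k
    have hfloor : ⌊x * 2 ^ (k + 1)⌋ / 2 = ⌊x * 2 ^ k⌋ := by
      rw [pow_succ, ← mul_assoc, mul_comm _ (2 : ℝ), floor_two_mul_div_two]
    have := hstep k ⌊x * 2 ^ (k + 1)⌋
    rw [hfloor] at this
    rwa [Real.dist_eq, abs_sub_comm, mul_comm C]
  choose F hF using fun x =>
    cauchySeq_tendsto_of_complete (cauchySeq_of_le_geometric γ C hγ1 (hdist x))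
  refine ⟨F, fun x k => ?_⟩
  have := dist_le_of_le_geometric_of_tendsto γ C hγ1 (hdist x) (hF x) k
  rw [Real.dist_eq] at this
  linarith [show C * γ ^ k / (1 - γ) = γ ^ k * (C / (1 - γ)) by ring]

lemma continuous_of_abs_sample_sub_le {F : ℝ → ℝ} (hγ0 : 0 ≤ γ) (hγ1 : γ < 1)
    (hdiff : ∀ k j, |g k (j + 1) - g k j| ≤ γ ^ k * D)
    (happrox : ∀ (x : ℝ) k, |g k ⌊x * 2 ^ k⌋ - F x| ≤ γ ^ k * C) : Continuous F := by
  rw [Metric.continuous_iff]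
  intro x ε hε
  have hlim : Tendsto (fun k : ℕ => γ ^ k * (2 * C + D)) atTop (𝓝 0) := by
    simpa using (tendsto_pow_atTop_nhds_zero_of_lt_one hγ0 hγ1).mul_const (2 * C + D)
  obtain ⟨k, hk⟩ := (hlim.eventually (gt_mem_nhds hε)).exists
  refine ⟨1 / 2 ^ k, by positivity, fun y hy => ?_⟩
  have hscaled : |y * 2 ^ k - x * 2 ^ k| < 1 := by
    rw [Real.dist_eq, lt_div_iff₀ (by positivity)] at hy
    rwa [← sub_mul, abs_mul, abs_of_pos (by positivity : (0 : ℝ) < 2 ^ k)]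
  have hmid := abs_sub_floor_le_of_abs_sub_lt_one (hdiff k) hscaled
  have hy' := happrox y k
  have hx' := happrox x k
  have h₁ := abs_sub_le (F y) (g k ⌊y * 2 ^ k⌋) (F x)
  have h₂ := abs_sub_le (g k ⌊y * 2 ^ k⌋) (g k ⌊x * 2 ^ k⌋) (F x)
  rw [abs_sub_comm] at hy'
  rw [Real.dist_eq]
  linarith

theorem unifConvergent_of_contraction {S : (ℤ → ℝ) → ℤ → ℝ} (hγ0 : 0 ≤ γ) (hγ1 : γ < 1)
    (hcontract : ∀ f D, (∀ j, |f (j + 1) - f j| ≤ D) → ∀ m, |S f (m + 1) - S f m| ≤ γ * D)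
    -- `m / 2` rounds down on `ℤ`: it is the index of the parent of `m` on the coarser grid
    (hprox : ∀ f D, (∀ j, |f (j + 1) - f j| ≤ D) → ∀ m, |S f m - f (m / 2)| ≤ C * D) :
    UnifConvergent S := by
  rintro f ⟨M, hM⟩
  have hdiff : ∀ k j, |S^[k] f (j + 1) - S^[k] f j| ≤ γ ^ k * (2 * M) := by
    intro k
    induction k with
    | zero => intro j; simpa [two_mul] using (abs_sub _ _).trans (add_le_add (hM _) (hM j))
    | succ k ih =>
      intro j
      rw [Function.iterate_succ_apply', pow_succ', mul_assoc]
      exact hcontract _ _ ih j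
  have hstep : ∀ k m, |S^[k + 1] f m - S^[k] f (m / 2)| ≤ γ ^ k * (C * (2 * M)) := by
    intro k m
    rw [Function.iterate_succ_apply', mul_left_comm]
    exact hprox _ _ (hdiff k) m
  obtain ⟨F, hF⟩ := exists_abs_sample_sub_le (g := fun k => S^[k] f) hγ1 hstep
  refine ⟨F, continuous_of_abs_sample_sub_le hγ0 hγ1 hdiff hF, fun ε hε => ?_⟩
  have hlim : Tendsto (fun k : ℕ => γ ^ k * (C * (2 * M) / (1 - γ))) atTop (𝓝 0) := by
    simpa using (tendsto_pow_atTop_nhds_zero_of_lt_one hγ0 hγ1).mul_const _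
  obtain ⟨K, hK⟩ := eventually_atTop.1 (hlim.eventually (ge_mem_nhds hε))
  refine ⟨K, fun k hk j => ?_⟩
  have hsample : ⌊((j : ℝ) / 2 ^ k) * 2 ^ k⌋ = j := by
    rw [div_mul_cancel₀ _ (by positivity), Int.floor_intCast]
  simpa only [hsample] using (hF ((j : ℝ) / 2 ^ k) k).trans (hK k hk)

end Convergence

section Sums

variable {a b : ℤ}

lemma sum_Icc_add_one_right (f : ℤ → ℝ) (h : a ≤ b + 1) :
    ∑ l ∈ Icc a (b + 1), f l = ∑ l ∈ Icc a b, f l + f (b + 1) := by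
  rw [← insert_Icc_right_eq_Icc_add_one h, sum_insert (by simp), add_comm]

lemma sum_Icc_mul_eq_sum_partialSum_mul_sub (e g : ℤ → ℝ) (h : a - 1 ≤ b) :
    ∑ l ∈ Icc a b, e l * g l =
      ∑ l ∈ Icc a b, (∑ k ∈ Icc a l, e k) * (g l - g (l + 1)) + (∑ k ∈ Icc a b, e k) * g (b + 1) := by
  induction b, h using Int.leInduction with
  | base => simp
  | succ b hb ih =>
    rw [sum_Icc_add_one_right _ (by omega), sum_Icc_add_one_right _ (by omega),
      sum_Icc_add_one_right e (by omega), ih]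
    ring

lemma abs_sub_le_abs_mul {f : ℤ → ℝ} {D : ℝ} (hf : ∀ i, |f (i + 1) - f i| ≤ D) (j l : ℤ) :
    |f (j + l) - f j| ≤ |(l : ℝ)| * D := by
  have hnat : ∀ (i : ℤ) (n : ℕ), |f (i + n) - f i| ≤ n * D := by
    intro i n
    induction n with
    | zero => simp
    | succ n ih =>
      have := hf (i + n)
      push_cast
      calc |f (i + (n + 1)) - f i| ≤ |f (i + n + 1) - f (i + n)| + |f (i + n) - f i| := by
            rw [← add_assoc]; exact abs_sub_le _ _ _
        _ ≤ (n + 1) * D := by linarith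
  obtain ⟨n, rfl | rfl⟩ := Int.eq_nat_or_neg l
  · simpa using hnat j n
  · have := hnat (j - n) n
    rw [sub_add_cancel, abs_sub_comm] at this
    simpa [sub_eq_add_neg] using this

variable {D : ℝ} {f : ℤ → ℝ}

lemma abs_sum_mul_sub_le (c : ℤ → ℝ) (s : Finset ℤ) (hf : ∀ i, |f (i + 1) - f i| ≤ D) (j : ℤ) :
    |∑ l ∈ s, c l * (f (j + l) - f (j + l + 1))| ≤ (∑ l ∈ s, |c l|) * D := by
  rw [sum_mul]
  refine (abs_sum_le_sum_abs _ _).trans (sum_le_sum fun l _ => ?_)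
  rw [abs_mul, abs_sub_comm]
  exact mul_le_mul_of_nonneg_left (hf _) (abs_nonneg _)

lemma abs_sum_mul_sub_le_of_sum_eq_one (c : ℤ → ℝ) (s : Finset ℤ) (hc : ∑ l ∈ s, c l = 1)
    (hf : ∀ i, |f (i + 1) - f i| ≤ D) (j : ℤ) :
    |∑ l ∈ s, c l * f (j + l) - f j| ≤ (∑ l ∈ s, |c l| * |(l : ℝ)|) * D := by
  have hsub : ∑ l ∈ s, c l * f (j + l) - f j = ∑ l ∈ s, c l * (f (j + l) - f j) := by
    simp only [mul_sub, sum_sub_distrib, ← sum_mul, hc, one_mul]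
  rw [hsub, sum_mul]
  refine (abs_sum_le_sum_abs _ _).trans (sum_le_sum fun l _ => ?_)
  rw [abs_mul, mul_assoc]
  exact mul_le_mul_of_nonneg_left (abs_sub_le_abs_mul hf j l) (abs_nonneg _)

end Sums

section Scheme

variable (a0 a1 : ℤ → ℝ) (N Ln : ℤ)

/-- The `∞`-norm of the difference scheme: `S f (2j+1) - S f (2j)` is the mask
`l ↦ ∑_{k ≤ l} (a1 k - a0 k)` applied to the differences of `f`. -/
noncomputable def diffSchemeNorm : ℝ :=
  ∑ l ∈ Icc (1 - N) Ln, |∑ k ∈ Icc (1 - N) l, (a1 k - a0 k)|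

def ReproducesConstants : Prop :=
  ∑ l ∈ Icc (1 - N) Ln, a0 l = 1 ∧ ∑ l ∈ Icc (1 - N) (Ln + 1), a1 l = 1

def IsOddSymmetric : Prop :=
  (∀ l, 1 - N ≤ l → l ≤ Ln → a0 l = a0 (Ln + 1 - N - l)) ∧
    ∀ l, 1 - N ≤ l → l ≤ Ln + 1 → a1 l = a1 (Ln + 2 - N - l)

lemma Sfam_two_mul (f : ℤ → ℝ) (j : ℤ) :
    Sfam a0 a1 N Ln f (2 * j) = ∑ l ∈ Icc (1 - N) Ln, a0 l * f (j + l) := by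
  simp [Sfam]

lemma Sfam_two_mul_add_one (f : ℤ → ℝ) (j : ℤ) :
    Sfam a0 a1 N Ln f (2 * j + 1) = ∑ l ∈ Icc (1 - N) (Ln + 1), a1 l * f (j + l) := by
  simp [Sfam]

variable {a0 a1 N Ln}

lemma Sfam_two_mul_add_one_sub (hLn : 1 - N ≤ Ln)
    (hrep : ReproducesConstants a0 a1 N Ln)
    (f : ℤ → ℝ) (j : ℤ) :
    Sfam a0 a1 N Ln f (2 * j + 1) - Sfam a0 a1 N Ln f (2 * j) =
      ∑ l ∈ Icc (1 - N) Ln, (∑ k ∈ Icc (1 - N) l, (a1 k - a0 k)) * (f (j + l) - f (j + l + 1)) := by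
  have habel1 := sum_Icc_mul_eq_sum_partialSum_mul_sub a1 (fun l => f (j + l)) (a := 1 - N)
    (b := Ln + 1) (by omega)
  have habel0 := sum_Icc_mul_eq_sum_partialSum_mul_sub a0 (fun l => f (j + l)) (a := 1 - N)
    (b := Ln) (by omega)
  rw [sum_Icc_add_one_right (fun l => (∑ k ∈ Icc (1 - N) l, a1 k) * (f (j + l) - f (j + (l + 1))))
    (by omega), hrep.2] at habel1
  rw [hrep.1] at habel0
  simp only [sub_mul, sum_sub_distrib, add_assoc]
  rw [Sfam_two_mul_add_one, Sfam_two_mul, habel1, habel0]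
  ring

lemma Sfam_comp_neg (hsym : IsOddSymmetric a0 a1 N Ln) (f : ℤ → ℝ) (m : ℤ) :
    Sfam a0 a1 N Ln (fun i => f (-i)) m = Sfam a0 a1 N Ln f (-m - 2 * (Ln + 1 - N)) := by
  obtain ⟨j, rfl | rfl⟩ := Int.even_or_odd' m
  · rw [show -(2 * j) - 2 * (Ln + 1 - N) = 2 * (-j - (Ln + 1 - N)) by ring, Sfam_two_mul,
      Sfam_two_mul]
    refine sum_nbij' (fun l => Ln + 1 - N - l) (fun l => Ln + 1 - N - l) ?_ ?_ ?_ ?_ ?_ <;>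
      simp only [mem_Icc] <;>
      try (intros; omega)
    intro l hl
    rw [← hsym.1 l hl.1 hl.2]
    ring_nf
  · rw [show -(2 * j + 1) - 2 * (Ln + 1 - N) = 2 * (-j - (Ln + 2 - N)) + 1 by ring,
      Sfam_two_mul_add_one, Sfam_two_mul_add_one]
    refine sum_nbij' (fun l => Ln + 2 - N - l) (fun l => Ln + 2 - N - l) ?_ ?_ ?_ ?_ ?_ <;>
      simp only [mem_Icc] <;>
      try (intros; omega)
    intro l hl
    rw [← hsym.2 l hl.1 hl.2]
    ring_nf

variable {f : ℤ → ℝ} {D : ℝ}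

lemma abs_Sfam_succ_sub_le (hLn : 1 - N ≤ Ln) (hrep : ReproducesConstants a0 a1 N Ln)
    (hsym : IsOddSymmetric a0 a1 N Ln)
    (hf : ∀ i, |f (i + 1) - f i| ≤ D) (m : ℤ) :
    |Sfam a0 a1 N Ln f (m + 1) - Sfam a0 a1 N Ln f m| ≤ diffSchemeNorm a0 a1 N Ln * D := by
  have heven : ∀ g : ℤ → ℝ, (∀ i, |g (i + 1) - g i| ≤ D) → ∀ j,
      |Sfam a0 a1 N Ln g (2 * j + 1) - Sfam a0 a1 N Ln g (2 * j)| ≤ diffSchemeNorm a0 a1 N Ln * D :=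
    fun g hg j => by
      rw [Sfam_two_mul_add_one_sub hLn hrep]
      exact abs_sum_mul_sub_le _ _ hg j
  obtain ⟨j, rfl | rfl⟩ := Int.even_or_odd' m
  · exact heven f hf j
  -- by odd symmetry, the odd-indexed differences of `S f` are even-indexed ones of `S (f ∘ neg)`
  have hf' : ∀ i, |f (-(i + 1)) - f (-i)| ≤ D := fun i => by
    simpa [abs_sub_comm, neg_add_eq_sub] using hf (-i - 1)
  have := heven (fun i => f (-i)) hf' (-j - 1 - (Ln + 1 - N))
  rw [Sfam_comp_neg hsym, Sfam_comp_neg hsym, abs_sub_comm] at this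
  convert this using 4 <;> ring

lemma abs_Sfam_sub_le (hrep : ReproducesConstants a0 a1 N Ln) (hf : ∀ i, |f (i + 1) - f i| ≤ D)
    (m : ℤ) :
    |Sfam a0 a1 N Ln f m - f (m / 2)| ≤
      (∑ l ∈ Icc (1 - N) Ln, |a0 l| * |(l : ℝ)| + ∑ l ∈ Icc (1 - N) (Ln + 1), |a1 l| * |(l : ℝ)|)
        * D := by
  have hD : 0 ≤ D := (abs_nonneg _).trans (hf 0)
  have h0 : 0 ≤ ∑ l ∈ Icc (1 - N) Ln, |a0 l| * |(l : ℝ)| := by positivity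
  have h1 : 0 ≤ ∑ l ∈ Icc (1 - N) (Ln + 1), |a1 l| * |(l : ℝ)| := by positivity
  obtain ⟨j, rfl | rfl⟩ := Int.even_or_odd' m
  · rw [Sfam_two_mul, show 2 * j / 2 = j by omega]
    exact (abs_sum_mul_sub_le_of_sum_eq_one a0 _ hrep.1 hf j).trans
      (mul_le_mul_of_nonneg_right (le_add_of_nonneg_right h1) hD)
  · rw [Sfam_two_mul_add_one, show (2 * j + 1) / 2 = j by omega]
    exact (abs_sum_mul_sub_le_of_sum_eq_one a1 _ hrep.2 hf j).trans
      (mul_le_mul_of_nonneg_right (le_add_of_nonneg_left h0) hD)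

theorem unifConvergent_Sfam_of_diffSchemeNorm_lt_one (hLn : 1 - N ≤ Ln)
    (hrep : ReproducesConstants a0 a1 N Ln) (hsym : IsOddSymmetric a0 a1 N Ln)
    (hnorm : diffSchemeNorm a0 a1 N Ln < 1) :
    UnifConvergent (Sfam a0 a1 N Ln) :=
  unifConvergent_of_contraction (by unfold diffSchemeNorm; positivity) hnorm
    (fun _ _ hf => abs_Sfam_succ_sub_le hLn hrep hsym hf)
    (fun _ _ hf => abs_Sfam_sub_le hrep hf)

end Scheme

section Riemann

open MeasureTheory intervalIntegral NNReal

lemma abs_sub_mul_sub_integral_le {φ : ℝ → ℝ} {K : ℝ≥0} {a b : ℝ} (hab : a ≤ b)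
    (hφ : LipschitzOnWith K φ (Set.Icc a b)) :
    |(b - a) * φ b - ∫ x in a..b, φ x| ≤ K * (b - a) ^ 2 := by
  have hb : b ∈ Set.Icc a b := ⟨hab, le_rfl⟩
  have hconst : (b - a) * φ b = ∫ _ in a..b, φ b := by simp
  rw [hconst, ← integral_sub intervalIntegrable_const
    (hφ.continuousOn.intervalIntegrable_of_Icc hab)]
  have hbound : ∀ x ∈ Set.uIoc a b, ‖φ b - φ x‖ ≤ K * (b - a) := fun x hx => by
    rw [Set.uIoc_of_le hab] at hx
    have hx' : x ∈ Set.Icc a b := Set.Ioc_subset_Icc_self hx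
    have := hφ.dist_le_mul b hb x hx'
    rw [Real.dist_eq, Real.dist_eq, abs_of_nonneg (sub_nonneg.2 hx'.2)] at this
    rw [Real.norm_eq_abs]
    nlinarith [hx.1, K.coe_nonneg]
  have := norm_integral_le_of_norm_le_const hbound
  rw [Real.norm_eq_abs, abs_of_nonneg (sub_nonneg.2 hab)] at this
  linarith

lemma abs_sum_div_sub_integral_le {φ : ℝ → ℝ} {K : ℝ≥0}
    (hφ : LipschitzOnWith K φ (Set.Icc (-1) 1)) {n : ℕ} (hn : 0 < n) {p : ℤ}
    (hp₁ : -(n : ℤ) ≤ p) (hp₂ : p ≤ n) :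
    |∑ k ∈ Icc (1 - (n : ℤ)) p, φ (k / n) / n - ∫ x in (-1)..(p / n), φ x|
      ≤ K * (p + n) / n ^ 2 := by
  have hn' : (0 : ℝ) < n := by exact_mod_cast hn
  induction p, hp₁ using Int.leInduction with
  | base => simp [hn'.ne']
  | succ p hp ih =>
    have hp' : (-n : ℝ) ≤ p := by exact_mod_cast hp
    have hpn : (p : ℝ) + 1 ≤ n := by exact_mod_cast hp₂
    have hlo : (-1 : ℝ) ≤ p / n := by rw [le_div_iff₀ hn']; linarith
    have hhi : ((p + 1 : ℤ) : ℝ) / n ≤ 1 := by push_cast; rw [div_le_iff₀ hn']; linarith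
    have hstep : (p : ℝ) / n ≤ ((p + 1 : ℤ) : ℝ) / n := by gcongr; linarith
    have hcell := abs_sub_mul_sub_integral_le hstep
      (hφ.mono (Set.Icc_subset_Icc hlo hhi))
    have hint : ∀ {u v : ℝ}, -1 ≤ u → u ≤ v → v ≤ 1 → IntervalIntegrable φ volume u v :=
      fun hu huv hv => (hφ.continuousOn.mono (Set.Icc_subset_Icc hu hv)).intervalIntegrable_of_Icc huv
    rw [sum_Icc_add_one_right _ (by omega), ← integral_add_adjacent_intervals
      (hint le_rfl (by linarith) (by linarith)) (hint hlo hstep hhi)]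
    have hwidth : ((p + 1 : ℤ) : ℝ) / n - p / n = 1 / n := by push_cast; ring
    rw [hwidth] at hcell
    have := ih (by omega)
    calc _ = |(∑ k ∈ Icc (1 - (n : ℤ)) p, φ (k / n) / n - ∫ x in (-1)..(p / n), φ x)
            + (1 / n * φ (((p + 1 : ℤ) : ℝ) / n) - ∫ x in (p / n)..(((p + 1 : ℤ) : ℝ) / n), φ x)| := by
          congr 1; ring
      _ ≤ K * (p + n) / n ^ 2 + K * (1 / n) ^ 2 := (abs_add_le _ _).trans (add_le_add this hcell)
      _ = K * ((p + 1 : ℤ) + n) / n ^ 2 := by push_cast; field_simp; ring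

lemma abs_sum_div_sub_integral_le_two_mul_div {φ : ℝ → ℝ} {K : ℝ≥0}
    (hφ : LipschitzOnWith K φ (Set.Icc (-1) 1)) {n : ℕ} (hn : 0 < n) {p : ℤ}
    (hp₁ : -(n : ℤ) ≤ p) (hp₂ : p ≤ n) :
    |∑ k ∈ Icc (1 - (n : ℤ)) p, φ (k / n) / n - ∫ x in (-1)..(p / n), φ x| ≤ 2 * K / n := by
  refine (abs_sum_div_sub_integral_le hφ hn hp₁ hp₂).trans ?_
  have hn' : (0 : ℝ) < n := by exact_mod_cast hn
  have hp : (p : ℝ) ≤ n := by exact_mod_cast hp₂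
  calc (K : ℝ) * (p + n) / n ^ 2 ≤ K * (2 * n) / n ^ 2 := by gcongr; linarith
    _ = 2 * (K : ℝ) / n := by field_simp

end Riemann

section Estimate

open MeasureTheory intervalIntegral NNReal

lemma exists_lipschitzOnWith_of_hasDerivWithinAt {f f' : ℝ → ℝ} {a b : ℝ}
    (hf : ∀ x ∈ Set.Icc a b, HasDerivWithinAt f (f' x) (Set.Icc a b) x)
    (hf' : ContinuousOn f' (Set.Icc a b)) : ∃ K, LipschitzOnWith K f (Set.Icc a b) := by
  obtain ⟨C, hC⟩ := isCompact_Icc.exists_bound_of_continuousOn hf'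
  refine ⟨C.toNNReal, (convex_Icc a b).lipschitzOnWith_of_nnnorm_hasDerivWithin_le hf
    fun x hx => ?_⟩
  rw [← NNReal.coe_le_coe, coe_nnnorm]
  exact (hC x hx).trans C.le_coe_toNNReal

lemma exists_lipschitzOnWith_abs_integral {f : ℝ → ℝ} {a b : ℝ} (hf : ContinuousOn f (Set.Icc a b)) :
    ∃ K, LipschitzOnWith K (fun t => |∫ s in a..t, f s|) (Set.Icc a b) := by
  obtain ⟨C, hC⟩ := isCompact_Icc.exists_bound_of_continuousOn hf
  refine ⟨C.toNNReal, LipschitzOnWith.of_dist_le' fun x hx y hy => ?_⟩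
  have hint : ∀ z ∈ Set.Icc a b, IntervalIntegrable f volume a z := fun z hz =>
    (hf.mono (Set.uIcc_subset_Icc (Set.left_mem_Icc.2 (hz.1.trans hz.2)) hz)).intervalIntegrable
  rw [Real.dist_eq, Real.dist_eq]
  calc |(|∫ s in a..x, f s|) - (|∫ s in a..y, f s|)|
      ≤ |(∫ s in a..x, f s) - ∫ s in a..y, f s| := abs_abs_sub_abs_le_abs_sub _ _
    _ = ‖∫ s in y..x, f s‖ := by rw [integral_interval_sub_left (hint x hx) (hint y hy)]; rfl
    _ ≤ C * |x - y| := norm_integral_le_of_norm_le_const fun z hz =>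
        hC z (Set.uIcc_subset_Icc hy hx (Set.uIoc_subset_uIcc hz))

lemma tendsto_sq_mul_div_rpow_atTop {α : ℝ} (hα : 2 < α) (μ : ℝ) :
    Tendsto (fun n : ℕ => (n : ℝ) ^ 2 * (μ / (n : ℝ) ^ α)) atTop (𝓝 0) := by
  have hpow := ((tendsto_rpow_neg_atTop (y := α - 2) (by linarith)).comp
    tendsto_natCast_atTop_atTop).const_mul μ
  rw [mul_zero] at hpow
  refine hpow.congr' ((eventually_gt_atTop 0).mono fun n hn => ?_)
  have hn' : (0 : ℝ) < n := by exact_mod_cast hn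
  rw [Function.comp_apply, Real.rpow_neg hn'.le, Real.rpow_sub hn', Real.rpow_two]
  field_simp

lemma natCast_card_Icc_le {n : ℕ} {p : ℤ} (hp : p ≤ n) :
    ((Icc (1 - (n : ℤ)) p).card : ℝ) ≤ 2 * n := by
  have : (Icc (1 - (n : ℤ)) p).card ≤ 2 * n := by rw [Int.card_Icc]; omega
  exact_mod_cast this

variable {r : ℝ → ℝ} {K : ℝ≥0} {n : ℕ} {a0 a1 : ℤ → ℝ} {δ : ℝ}

lemma abs_partialSum_le (hr : LipschitzOnWith K r (Set.Icc (-1) 1)) (hn : 0 < n) {l : ℤ}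
    (hl₁ : -(n : ℤ) ≤ l) (hl₂ : l ≤ n) (hδ : 0 ≤ δ)
    (herr : ∀ k ∈ Icc (1 - (n : ℤ)) l, |a0 k - a1 k - r (k / n) / n ^ 2| ≤ δ) :
    |∑ k ∈ Icc (1 - (n : ℤ)) l, (a1 k - a0 k)|
      ≤ |∫ s in (-1)..(l / n), r s| / n + (2 * K / n ^ 2 + 2 * n * δ) := by
  have hn' : (0 : ℝ) < n := by exact_mod_cast hn
  set S := ∑ k ∈ Icc (1 - (n : ℤ)) l, r (k / n) / n
  set I := ∫ s in (-1)..(l / n), r s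
  have hsplit : ∑ k ∈ Icc (1 - (n : ℤ)) l, (a1 k - a0 k)
      = -(S / n) - ∑ k ∈ Icc (1 - (n : ℤ)) l, (a0 k - a1 k - r (k / n) / n ^ 2) := by
    simp only [S, sum_div, ← sum_neg_distrib, ← sum_sub_distrib]
    exact sum_congr rfl fun k _ => by ring
  have hriemann : |S - I| ≤ 2 * K / n := abs_sum_div_sub_integral_le_two_mul_div hr hn hl₁ hl₂
  have hS : |S / n| ≤ |I| / n + 2 * K / n ^ 2 := by
    have : |S| ≤ |I| + 2 * K / n := by linarith [abs_sub_abs_le_abs_sub S I]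
    calc |S / n| = |S| / n := by rw [abs_div, abs_of_pos hn']
      _ ≤ (|I| + 2 * K / n) / n := by gcongr
      _ = |I| / n + 2 * K / n ^ 2 := by field_simp
  have hε : |∑ k ∈ Icc (1 - (n : ℤ)) l, (a0 k - a1 k - r (k / n) / n ^ 2)| ≤ 2 * n * δ := by
    refine (abs_sum_le_sum_abs _ _).trans ((sum_le_sum herr).trans ?_)
    rw [sum_const, nsmul_eq_mul]
    exact mul_le_mul_of_nonneg_right (natCast_card_Icc_le hl₂) hδ
  rw [hsplit]
  calc _ ≤ |S / n| + |∑ k ∈ Icc (1 - (n : ℤ)) l, (a0 k - a1 k - r (k / n) / n ^ 2)| := by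
        rw [← abs_neg (S / n)]; exact abs_sub _ _
    _ ≤ _ := by linarith

lemma diffSchemeNorm_le {Kr : ℝ≥0} (hr : LipschitzOnWith K r (Set.Icc (-1) 1))
    (hR : LipschitzOnWith Kr (fun t => |∫ s in (-1)..t, r s|) (Set.Icc (-1) 1)) (hn : 0 < n)
    {Ln : ℤ} (hLn₁ : -(n : ℤ) ≤ Ln) (hLn₂ : Ln ≤ n) (hδ : 0 ≤ δ)
    (herr : ∀ k ∈ Icc (1 - (n : ℤ)) Ln, |a0 k - a1 k - r (k / n) / n ^ 2| ≤ δ) :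
    diffSchemeNorm a0 a1 n Ln
      ≤ (∫ t in (-1)..1, |∫ s in (-1)..t, r s|) + (2 * Kr + 4 * K) / n + 4 * (n ^ 2 * δ) := by
  have hn' : (0 : ℝ) < n := by exact_mod_cast hn
  set A := ∫ t in (-1)..1, |∫ s in (-1)..t, r s|
  set c := 2 * K / n ^ 2 + 2 * n * δ
  have hpoint : ∀ l ∈ Icc (1 - (n : ℤ)) Ln,
      |∑ k ∈ Icc (1 - (n : ℤ)) l, (a1 k - a0 k)| ≤ |∫ s in (-1)..(l / n), r s| / n + c :=
    fun l hl => by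
      rw [mem_Icc] at hl
      exact abs_partialSum_le hr hn (by omega) (by omega) hδ fun k hk => herr k (by
        rw [mem_Icc] at hk ⊢; omega)
  have hLn : (-1 : ℝ) ≤ Ln / n ∧ (Ln : ℝ) / n ≤ 1 := by
    have h₁ : (-n : ℝ) ≤ Ln := by exact_mod_cast hLn₁
    have h₂ : (Ln : ℝ) ≤ n := by exact_mod_cast hLn₂
    constructor
    · rw [le_div_iff₀ hn']; linarith
    · rw [div_le_iff₀ hn']; linarith
  have hmono : (∫ t in (-1)..(Ln / n), |∫ s in (-1)..t, r s|) ≤ A :=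
    integral_mono_interval le_rfl hLn.1 hLn.2 (Eventually.of_forall fun _ => abs_nonneg _)
      (hR.continuousOn.intervalIntegrable_of_Icc (by norm_num))
  have hriemann := abs_sum_div_sub_integral_le_two_mul_div hR hn hLn₁ hLn₂
  calc diffSchemeNorm a0 a1 n Ln
      ≤ ∑ l ∈ Icc (1 - (n : ℤ)) Ln, (|∫ s in (-1)..(l / n), r s| / n + c) := sum_le_sum hpoint
    _ = ∑ l ∈ Icc (1 - (n : ℤ)) Ln, |∫ s in (-1)..(l / n), r s| / n
          + (Icc (1 - (n : ℤ)) Ln).card * c := by rw [sum_add_distrib, sum_const, nsmul_eq_mul]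
    _ ≤ (A + 2 * Kr / n) + 2 * n * c := by
        gcongr
        · linarith [le_abs_self (∑ l ∈ Icc (1 - (n : ℤ)) Ln, |∫ s in (-1)..(l / n), r s| / n
            - ∫ t in (-1)..(Ln / n), |∫ s in (-1)..t, r s|)]
        · exact natCast_card_Icc_le hLn₂
    _ = A + (2 * Kr + 4 * K) / n + 4 * (n ^ 2 * δ) := by simp only [c]; field_simp; ring

end Estimate

/-- for a family of odd-symmetric subdivision schemes `S_{a^n}`
reproducing `Π₀` (with `L_n = n−1` for all `n` or `L_n = n` for all `n`), a `C¹`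
function `r : [−1,1] → ℝ` with `R(t) = ∫_{−1}^t r`, if
`a^{n,0}_j − a^{n,1}_j = r(j/n) n^{−2} + ε^n_j` with `|ε^n_j| ≤ μ n^{−α}` (`α > 2`,
`μ > 0`) and `∫_{−1}^1 |R| < 1`, then there is `n₀ ∈ ℕ` such that `S_{a^n}` is
uniformly convergent for every `n > n₀`. -/
theorem stmt18
    (a0 a1 : ℕ → ℤ → ℝ) (L : ℕ → ℤ)
    (hL : (∀ n : ℕ, L n = (n : ℤ) - 1) ∨ (∀ n : ℕ, L n = (n : ℤ)))
    (hrep : ∀ n : ℕ, 1 ≤ n →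
      (∑ l ∈ Finset.Icc (1 - (n : ℤ)) (L n), a0 n l) = 1 ∧
      (∑ l ∈ Finset.Icc (1 - (n : ℤ)) (L n + 1), a1 n l) = 1)
    (hsym0 : ∀ n : ℕ, 1 ≤ n → ∀ l : ℤ, 1 - (n : ℤ) ≤ l → l ≤ L n →
      a0 n l = a0 n (L n + 1 - (n : ℤ) - l))
    (hsym1 : ∀ n : ℕ, 1 ≤ n → ∀ l : ℤ, 1 - (n : ℤ) ≤ l → l ≤ L n + 1 →
      a1 n l = a1 n (L n + 2 - (n : ℤ) - l))
    (r r' : ℝ → ℝ)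
    (hr' : ∀ t ∈ Set.Icc (-1 : ℝ) 1, HasDerivWithinAt r (r' t) (Set.Icc (-1 : ℝ) 1) t)
    (hr'c : ContinuousOn r' (Set.Icc (-1 : ℝ) 1))
    (α μ : ℝ) (hα : 2 < α) (hμ : 0 < μ)
    (herr : ∀ n : ℕ, 1 ≤ n → ∀ j : ℤ, 1 - (n : ℤ) ≤ j → j ≤ L n →
      |a0 n j - a1 n j - r ((j : ℝ) / n) / (n : ℝ) ^ 2| ≤ μ / (n : ℝ) ^ α)
    (hRlt : (∫ t in (-1 : ℝ)..1, |∫ s in (-1 : ℝ)..t, r s|) < 1) :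
    ∃ n₀ : ℕ, ∀ n : ℕ, n₀ < n →
      UnifConvergent (Sfam (a0 n) (a1 n) n (L n)) := by
  obtain ⟨K, hK⟩ := exists_lipschitzOnWith_of_hasDerivWithinAt hr' hr'c
  obtain ⟨Kr, hKr⟩ := exists_lipschitzOnWith_abs_integral hK.continuousOn
  set A := ∫ t in (-1 : ℝ)..1, |∫ s in (-1 : ℝ)..t, r s|
  have hbound : Tendsto (fun n : ℕ => A + (2 * Kr + 4 * K) / n + 4 * ((n : ℝ) ^ 2 * (μ / n ^ α)))
      atTop (𝓝 A) := by
    simpa using (tendsto_const_nhds.add (tendsto_const_div_atTop_nhds_zero_nat _)).add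
      ((tendsto_sq_mul_div_rpow_atTop hα μ).const_mul 4)
  obtain ⟨n₀, hn₀⟩ := eventually_atTop.1
    ((hbound.eventually (gt_mem_nhds hRlt)).and (eventually_ge_atTop 1))
  refine ⟨n₀, fun n hn => ?_⟩
  obtain ⟨hlt, hn1⟩ := hn₀ n hn.le
  have hLn : L n = n - 1 ∨ L n = n := hL.imp (· n) (· n)
  refine unifConvergent_Sfam_of_diffSchemeNorm_lt_one (by omega) (hrep n hn1)
    ⟨hsym0 n hn1, hsym1 n hn1⟩ ((diffSchemeNorm_le hK hKr hn1 (by omega) (by omega) (by positivity)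
      fun k hk => herr n hn1 k (mem_Icc.1 hk).1 (mem_Icc.1 hk).2).trans_lt hlt)
end
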